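/- If p ∈ (ω)^ω is homogeneous for the coloring (ω)^3 = R ∪ ¬R, where R = {x ∈ (ω)^3 : f(μ^x(1)) ≤ μ^x(2)} for some function f : ω → ω, then (p)^3 ⊆ R (homogeneity must be on the R side). -/

import Mathlib

open Set

/-- `f : ℕ → ℕ` is ordered: a value `i` can occur only after all `j < i` have occurred. -/
def IsOrderedFn (f : ℕ → ℕ) : Prop :=
  ∀ n i, f n = i → ∀ j < i, ∃ m < n, f m = j

/-- `(ω)^k`: ordered surjections from `ω` onto `k`. -/
def OmegaPart (k : ℕ) : Set (ℕ → ℕ) :=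
  {f | IsOrderedFn f ∧ (∀ n, f n < k) ∧ ∀ i < k, ∃ n, f n = i}

/-- `(ω)^ω`: ordered surjections from `ω` onto `ω` (infinite partitions). -/
def OmegaPartInf : Set (ℕ → ℕ) :=
  {f | IsOrderedFn f ∧ Function.Surjective f}

/-- `(p)^k`: the `k`-coarsenings of `p`. -/
def Coarsenings (p : ℕ → ℕ) (k : ℕ) : Set (ℕ → ℕ) :=
  {q | q ∈ OmegaPart k ∧ ∀ n m, p n = p m → q n = q m}

/-- `(p)^ω`: the infinite coarsenings of `p`. -/
def CoarseningsInf (p : ℕ → ℕ) : Set (ℕ → ℕ) :=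
  {q | q ∈ OmegaPartInf ∧ ∀ n m, p n = p m → q n = q m}

/-- `μ^x(i)`: the least `n` with `x n = i`. -/
noncomputable def mu (x : ℕ → ℕ) (i : ℕ) : ℕ := sInf {n | x n = i}

/-- `x ↾ n` as a finite string. -/
def restrictList (x : ℕ → ℕ) (n : ℕ) : List ℕ := (List.range n).map x

/-- The basic (cylinder) set `[σ]` of functions extending the finite string `σ`. -/
def Cyl (σ : List ℕ) : Set (ℕ → ℕ) := {x | ∀ n < σ.length, x n = σ.getD n 0}

/-- A finite string is ordered. -/
def ListOrdered (σ : List ℕ) : Prop :=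
  ∀ n < σ.length, ∀ j < σ.getD n 0, ∃ m < n, σ.getD m 0 = j

/-- `(ω)^k_fin`: ordered finite strings over `k` in which all `i < k` appear. -/
def OmegaPartFin (k : ℕ) : Set (List ℕ) :=
  {σ | ListOrdered σ ∧ (∀ a ∈ σ, a < k) ∧ ∀ i < k, i ∈ σ}

/-- Composition `σ ∘ τ` of finite strings: `(σ ∘ τ)(n) = σ(τ(n))`. -/
def listComp (σ τ : List ℕ) : List ℕ := τ.map fun n => σ.getD n 0

/-- `σ'` is a `k`-coarsening of the finite string `τ`. -/
def IsListCoarsening (k : ℕ) (σ' τ : List ℕ) : Prop :=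
  σ' ∈ OmegaPartFin k ∧ σ'.length = τ.length ∧
    ∀ n < τ.length, ∀ m < τ.length,
      τ.getD n 0 = τ.getD m 0 → σ'.getD n 0 = σ'.getD m 0

/-- The open set coded by a set `W` of finite strings. -/
def OpenFrom (W : Set (List ℕ)) : Set (ℕ → ℕ) := {x | ∃ σ ∈ W, x ∈ Cyl σ}

/-- Codes for partial recursive functionals with an oracle. -/
inductive OracleCode : Type
  | oracle : OracleCode
  | zero : OracleCode
  | succ : OracleCode
  | left : OracleCode
  | right : OracleCode
  | pair : OracleCode → OracleCode → OracleCode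
  | comp : OracleCode → OracleCode → OracleCode
  | prec : OracleCode → OracleCode → OracleCode
  | rfind' : OracleCode → OracleCode

/-- Evaluation of an oracle code with oracle `g`. -/
def OracleCode.evalo (g : ℕ →. ℕ) : OracleCode → ℕ →. ℕ
  | .oracle => g
  | .zero => fun _ => Part.some 0
  | .succ => fun n => Part.some (n + 1)
  | .left => fun n => Part.some (Nat.unpair n).1
  | .right => fun n => Part.some (Nat.unpair n).2
  | .pair cf cg => fun n => Nat.pair <$> OracleCode.evalo g cf n <*> OracleCode.evalo g cg n
  | .comp cf cg => fun n => OracleCode.evalo g cg n >>= OracleCode.evalo g cf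
  | .prec cf cg =>
      Nat.unpaired fun a n =>
        n.rec (OracleCode.evalo g cf a) fun y IH => do
          let i ← IH
          OracleCode.evalo g cg (Nat.pair a (Nat.pair y i))
  | .rfind' cf =>
      Nat.unpaired fun a m =>
        (Nat.rfind fun n =>
            (fun x => decide (x = 0)) <$> OracleCode.evalo g cf (Nat.pair a (n + m))).map (· + m)

/-- View a total function as a partial function. -/
def toP (f : ℕ → ℕ) : ℕ →. ℕ := fun n => Part.some (f n)

/-- `f` is Turing reducible to `g`. -/
def TuringReducibleFun (f g : ℕ → ℕ) : Prop :=
  ∃ c : OracleCode, c.evalo (toP g) = toP f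

open Classical in
/-- Characteristic function of a set of naturals. -/
noncomputable def chi (A : Set ℕ) : ℕ → ℕ := fun n => if n ∈ A then 1 else 0

/-- A numbering of oracle codes. -/
def OracleCode.encodeC : OracleCode → ℕ
  | .oracle => 0
  | .zero => 1
  | .succ => 2
  | .left => 3
  | .right => 4
  | .pair a b => Nat.pair a.encodeC b.encodeC * 4 + 5
  | .comp a b => Nat.pair a.encodeC b.encodeC * 4 + 6
  | .prec a b => Nat.pair a.encodeC b.encodeC * 4 + 7
  | .rfind' a => a.encodeC * 4 + 8

/-- The Turing jump of (the characteristic function) `g`. -/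
def JumpSet (g : ℕ → ℕ) : Set ℕ :=
  {n | ∃ c : OracleCode, ∃ m, n = Nat.pair c.encodeC m ∧ (c.evalo (toP g) m).Dom}

/-- `∅^{(n)}`: the iterated Turing jump of the empty set. -/
noncomputable def EmptyIter : ℕ → Set ℕ
  | 0 => (∅ : Set ℕ)
  | n + 1 => JumpSet (chi (EmptyIter n))

/-- The clopen set coded by the leaf label `e`: `∅`, `univ`, `[τ_m]`, or its complement. -/
def leafSet (e : ℕ) : Set (ℕ → ℕ) :=
  if e = 0 then ∅
  else if e = 1 then Set.univ
  else if e % 2 = 0 then Cyl (Denumerable.ofNat (List ℕ) (e / 2 - 1))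
  else (Cyl (Denumerable.ofNat (List ℕ) (e / 2 - 1)))ᶜ

/-- Evaluation of a normal-form Borel code of height `m` (alternating ∃/∀ over the
labelling function `f` on tuples, `true` for Σ, `false` for Π). -/
def NFEval : ℕ → Bool → (List ℕ → ℕ) → (ℕ → ℕ) → Prop
  | 0, _, f, x => x ∈ leafSet (f [])
  | m + 1, true, f, x => ∃ t, NFEval m false (fun l => f (t :: l)) x
  | m + 1, false, f, x => ∀ t, NFEval m true (fun l => f (t :: l)) x


lemma apply_mu {x : ℕ → ℕ} {i : ℕ} (h : ∃ n, x n = i) : x (mu x i) = i :=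
  Nat.sInf_mem h

lemma mu_le {x : ℕ → ℕ} {i n : ℕ} (h : x n = i) : mu x i ≤ n :=
  Nat.sInf_le h

lemma mu_congr {x y : ℕ → ℕ} {i j : ℕ} (h : ∀ n, x n = i ↔ y n = j) : mu x i = mu y j :=
  congrArg sInf (Set.ext h)

lemma IsOrderedFn.strictMono_mu {p : ℕ → ℕ} (hord : IsOrderedFn p)
    (hsurj : Function.Surjective p) : StrictMono (mu p) := by
  intro j i hji
  obtain ⟨m, hm, hpm⟩ := hord (mu p i) i (apply_mu (hsurj i)) j hji
  exact (mu_le hpm).trans_lt hm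

section TwoBlockCoarsening

variable {p : ℕ → ℕ} {a b : ℕ}

def twoBlockCoarsening (p : ℕ → ℕ) (a b : ℕ) (n : ℕ) : ℕ :=
  if p n = a then 1 else if p n = b then 2 else 0

lemma twoBlockCoarsening_lt_three (n : ℕ) : twoBlockCoarsening p a b n < 3 := by
  unfold twoBlockCoarsening
  split_ifs <;> omega

lemma twoBlockCoarsening_eq_one_iff (n : ℕ) : twoBlockCoarsening p a b n = 1 ↔ p n = a := by
  unfold twoBlockCoarsening
  split_ifs <;> simp_all

lemma twoBlockCoarsening_eq_two_iff (hab : a ≠ b) (n : ℕ) :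
    twoBlockCoarsening p a b n = 2 ↔ p n = b := by
  unfold twoBlockCoarsening
  split_ifs <;> simp_all

lemma twoBlockCoarsening_eq_zero_of_eq_zero (ha : 0 < a) (hab : a < b) {n : ℕ} (h : p n = 0) :
    twoBlockCoarsening p a b n = 0 := by
  simp [twoBlockCoarsening, h, ha.ne, (ha.trans hab).ne]

lemma mu_twoBlockCoarsening_one : mu (twoBlockCoarsening p a b) 1 = mu p a :=
  mu_congr twoBlockCoarsening_eq_one_iff

lemma mu_twoBlockCoarsening_two (hab : a ≠ b) : mu (twoBlockCoarsening p a b) 2 = mu p b :=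
  mu_congr (twoBlockCoarsening_eq_two_iff hab)

lemma isOrderedFn_twoBlockCoarsening (hord : IsOrderedFn p) (ha : 0 < a) (hab : a < b) :
    IsOrderedFn (twoBlockCoarsening p a b) := by
  intro n i hni j hj
  have hi : i < 3 := hni ▸ twoBlockCoarsening_lt_three n
  interval_cases i <;> interval_cases j
  · obtain ⟨m, hm, hpm⟩ := hord n a ((twoBlockCoarsening_eq_one_iff n).mp hni) 0 ha
    exact ⟨m, hm, twoBlockCoarsening_eq_zero_of_eq_zero ha hab hpm⟩
  · obtain ⟨m, hm, hpm⟩ :=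
      hord n b ((twoBlockCoarsening_eq_two_iff hab.ne n).mp hni) 0 (ha.trans hab)
    exact ⟨m, hm, twoBlockCoarsening_eq_zero_of_eq_zero ha hab hpm⟩
  · obtain ⟨m, hm, hpm⟩ := hord n b ((twoBlockCoarsening_eq_two_iff hab.ne n).mp hni) a hab
    exact ⟨m, hm, (twoBlockCoarsening_eq_one_iff m).mpr hpm⟩

lemma twoBlockCoarsening_mem_coarsenings (hp : p ∈ OmegaPartInf) (ha : 0 < a) (hab : a < b) :
    twoBlockCoarsening p a b ∈ Coarsenings p 3 := by
  obtain ⟨hord, hsurj⟩ := hp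
  refine ⟨⟨isOrderedFn_twoBlockCoarsening hord ha hab, twoBlockCoarsening_lt_three, ?_⟩, ?_⟩
  · intro i hi
    interval_cases i
    · exact ⟨mu p 0, twoBlockCoarsening_eq_zero_of_eq_zero ha hab (apply_mu (hsurj 0))⟩
    · exact ⟨mu p a, (twoBlockCoarsening_eq_one_iff _).mpr (apply_mu (hsurj a))⟩
    · exact ⟨mu p b, (twoBlockCoarsening_eq_two_iff hab.ne _).mpr (apply_mu (hsurj b))⟩
  · intro n m hnm
    simp only [twoBlockCoarsening, hnm]

end TwoBlockCoarsening

/-- for `R = {x : f(μ^x(1)) ≤ μ^x(2)}`, homogeneity is on the `R` side. -/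
theorem stmt9 (f : ℕ → ℕ) (p : ℕ → ℕ) (hp : p ∈ OmegaPartInf)
    (hhom : Coarsenings p 3 ⊆ {x ∈ OmegaPart 3 | f (mu x 1) ≤ mu x 2} ∨
            Coarsenings p 3 ⊆ OmegaPart 3 \ {x ∈ OmegaPart 3 | f (mu x 1) ≤ mu x 2}) :
    Coarsenings p 3 ⊆ {x ∈ OmegaPart 3 | f (mu x 1) ≤ mu x 2} := by
  rcases hhom with hR | hnotR
  · exact hR
  -- `μ^p` is strictly increasing, so block `b` of `p` starts at or after `b ≥ f (μ^p(1))`.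
  set b := max 2 (f (mu p 1))
  have hb : 1 < b := lt_max_of_lt_left one_lt_two
  have hx := twoBlockCoarsening_mem_coarsenings hp one_pos hb
  have hxR : f (mu (twoBlockCoarsening p 1 b) 1) ≤ mu (twoBlockCoarsening p 1 b) 2 := by
    rw [mu_twoBlockCoarsening_one, mu_twoBlockCoarsening_two hb.ne]
    calc f (mu p 1) ≤ b := le_max_right _ _
      _ ≤ mu p b := (hp.1.strictMono_mu hp.2).le_apply
  exact absurd ⟨(hnotR hx).1, hxR⟩ (hnotR hx).2
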